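/- Fix integers v ≥ 1 and block sizes p₀, p₁, …, p_v ≥ 1 with p = p₀ + p₁ + ⋯ + p_v, partitioning the coordinates of ℝ^p into consecutive blocks of sizes p₁, …, p_v, p₀ (the last block, indexed 0, is the noise block). Fix a finite nonempty set 𝒯 of lags and real numbers λ_{τj} for τ ∈ 𝒯, j = 0, 1, …, v, with λ_{τ0} = 0 for all τ ∈ 𝒯, and let D_τ = diag(λ_{τ1}I_{p₁}, …, λ_{τv}I_{p_v}, λ_{τ0}I_{p₀}) ∈ ℝ^{p×p}. Let W ∈ ℝ^{p×p} be orthogonal and suppose there exists a permutation matrix P ∈ ℝ^{p×p} such that WP is block diagonal with diagonal blocks of sizes p₁, …, p_v, p₀ conforming to the partition. Then g(W) = Σ_{τ∈𝒯} Σ_{j=1}^v λ_{τj}² p_j. -/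

import Mathlib

open MeasureTheory Filter Matrix Finset
open scoped Topology ENNReal NNReal Kronecker

noncomputable section

/-- Squared Frobenius norm of a real matrix. -/
def frobSq {ι κ : Type*} [Fintype ι] [Fintype κ] (M : Matrix ι κ ℝ) : ℝ :=
  ∑ i, ∑ j, (M i j) ^ 2

/-- Frobenius norm of a real matrix. -/
def frobNorm {ι κ : Type*} [Fintype ι] [Fintype κ] (M : Matrix ι κ ℝ) : ℝ :=
  Real.sqrt (frobSq M)

/-- Euclidean norm of a vector. -/
def euclNorm {ι : Type*} [Fintype ι] (x : ι → ℝ) : ℝ :=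
  Real.sqrt (∑ i, (x i) ^ 2)

/-- `X_T = O_p(1)` (boundedness in probability), matrix version, Frobenius norm. -/
def MatIsOp {Ω ι κ : Type*} [MeasurableSpace Ω] [Fintype ι] [Fintype κ]
    (μ : Measure Ω) (X : ℕ → Ω → Matrix ι κ ℝ) : Prop :=
  ∀ ε : ℝ, 0 < ε → ∃ M : ℝ, 0 < M ∧ ∀ T, μ {ω | M < frobNorm (X T ω)} ≤ ENNReal.ofReal ε

/-- `X_T = O_p(1)` (boundedness in probability), vector version, Euclidean norm. -/
def VecIsOp {Ω ι : Type*} [MeasurableSpace Ω] [Fintype ι]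
    (μ : Measure Ω) (X : ℕ → Ω → ι → ℝ) : Prop :=
  ∀ ε : ℝ, 0 < ε → ∃ M : ℝ, 0 < M ∧ ∀ T, μ {ω | M < euclNorm (X T ω)} ≤ ENNReal.ofReal ε

/-- Convergence to zero in probability, matrix version (Frobenius norm). -/
def MatTendstoP0 {Ω ι κ : Type*} [MeasurableSpace Ω] [Fintype ι] [Fintype κ]
    (μ : Measure Ω) (X : ℕ → Ω → Matrix ι κ ℝ) : Prop :=
  ∀ ε : ℝ, 0 < ε → Tendsto (fun T => μ {ω | ε < frobNorm (X T ω)}) atTop (𝓝 0)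

/-- Convergence to zero in probability, real-valued version. -/
def RealTendstoP0 {Ω : Type*} [MeasurableSpace Ω]
    (μ : Measure Ω) (X : ℕ → Ω → ℝ) : Prop :=
  ∀ ε : ℝ, 0 < ε → Tendsto (fun T => μ {ω | ε < |X T ω|}) atTop (𝓝 0)

/-- Convergence in distribution: weak convergence of the laws to the measure `ν`. -/
def TendstoInDist {Ω E : Type*} [MeasurableSpace Ω] [MeasurableSpace E] [TopologicalSpace E]
    (μ : Measure Ω) (X : ℕ → Ω → E) (ν : Measure E) : Prop :=
  ∀ f : BoundedContinuousFunction E ℝ,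
    Tendsto (fun T => ∫ ω, f (X T ω) ∂μ) atTop (𝓝 (∫ x, f x ∂ν))

open Classical in
/-- The centered (possibly degenerate) Gaussian distribution `N(0, V)` on `ι → ℝ`,
realized as the law of `V^{1/2} z` with `z` standard Gaussian. -/
def gaussianOfCov {ι : Type*} [Fintype ι] [DecidableEq ι] (V : Matrix ι ι ℝ) :
    Measure (ι → ℝ) :=
  if h : V.PosSemidef then
    Measure.map (fun z => (h.1.eigenvectorUnitary.1 * diagonal ((RCLike.ofReal : ℝ → ℝ) ∘ (√·) ∘ h.1.eigenvalues) *
      (star h.1.eigenvectorUnitary : Matrix ι ι ℝ)).mulVec z)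
      (Measure.pi fun _ : ι => ProbabilityTheory.gaussianReal 0 1)
  else 0

/-- Chi-squared distribution with `k` degrees of freedom: Gamma, shape `k/2`, rate `1/2`. -/
def chiSq (k : ℝ) : Measure ℝ := ProbabilityTheory.gammaMeasure (k / 2) (1 / 2)

open Classical in
/-- Inverse of the unique symmetric positive definite square root of `S`
(junk value `0` if `S` is not positive definite). -/
def invSqrt {ι : Type*} [Fintype ι] [DecidableEq ι] (S : Matrix ι ι ℝ) : Matrix ι ι ℝ :=
  if h : S.PosDef then (h.posSemidef.1.eigenvectorUnitary.1 *
    diagonal ((RCLike.ofReal : ℝ → ℝ) ∘ (√·) ∘ h.posSemidef.1.eigenvalues) *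
    (star h.posSemidef.1.eigenvectorUnitary : Matrix ι ι ℝ))⁻¹ else 0

/-- Column-vectorization of an `r × r` matrix, indexed by (column, row) pairs. -/
def vecM {r : ℕ} (M : Matrix (Fin r) (Fin r) ℝ) : Fin r × Fin r → ℝ :=
  fun q => M q.2 q.1

/-- The commutation matrix `K_rr = ∑ i j, E_r^{ij} ⊗ E_r^{ji}`. -/
def commMatrix (r : ℕ) : Matrix (Fin r × Fin r) (Fin r × Fin r) ℝ :=
  ∑ i : Fin r, ∑ j : Fin r, single i j (1 : ℝ) ⊗ₖ single j i (1 : ℝ)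

/-- The matrix `D_rr = ∑ i, E_r^{ii} ⊗ E_r^{ii}`. -/
def dblDiagMatrix (r : ℕ) : Matrix (Fin r × Fin r) (Fin r × Fin r) ℝ :=
  ∑ i : Fin r, single i i (1 : ℝ) ⊗ₖ single i i (1 : ℝ)

/-- The all-ones matrix `J_r`. -/
def onesMat (r : ℕ) : Matrix (Fin r) (Fin r) ℝ := Matrix.of fun _ _ => 1


/-- Index set for `ℝ^p` partitioned into blocks of sizes `s 0, …, s v`
(the block `Fin.last v` is the noise block, placed last). -/
abbrev BlkIdx (v : ℕ) (s : Fin (v + 1) → ℕ) : Type := (j : Fin (v + 1)) × Fin (s j)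

/-- The `(i, j)` block of a matrix, relative to the block partition. -/
def blk {v : ℕ} {s : Fin (v + 1) → ℕ} (U : Matrix (BlkIdx v s) (BlkIdx v s) ℝ)
    (i j : Fin (v + 1)) : Matrix (Fin (s i)) (Fin (s j)) ℝ :=
  Matrix.of fun a b => U ⟨i, a⟩ ⟨j, b⟩

/-- The diagonal matrix `D_τ = diag(λ_{τ1} I_{p₁}, …, λ_{τv} I_{p_v}, λ_{τ0} I_{p₀})`. -/
def Dmat {v : ℕ} (s : Fin (v + 1) → ℕ) {ι : Type*} (lam : ι → Fin (v + 1) → ℝ) (τ : ι) :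
    Matrix (BlkIdx v s) (BlkIdx v s) ℝ :=
  Matrix.diagonal fun i => lam τ i.1

/-- The SOBI objective `g(U) = ∑_τ ‖diag(Uᵀ D_τ U)‖²`. -/
def gObj {v : ℕ} (s : Fin (v + 1) → ℕ) {ι : Type*} [Fintype ι] (lam : ι → Fin (v + 1) → ℝ)
    (U : Matrix (BlkIdx v s) (BlkIdx v s) ℝ) : ℝ :=
  ∑ τ : ι, ∑ i : BlkIdx v s, ((Uᵀ * Dmat s lam τ * U) i i) ^ 2

/-- The value `∑_{τ∈𝒯} ∑_{j=1}^{v} λ_{τj}² p_j`. -/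
def gMax {v : ℕ} (s : Fin (v + 1) → ℕ) {ι : Type*} [Fintype ι]
    (lam : ι → Fin (v + 1) → ℝ) : ℝ :=
  ∑ τ : ι, ∑ j ∈ Finset.univ.erase (Fin.last v), (lam τ j) ^ 2 * (s j : ℝ)

/-!
If `W P_σ` is block diagonal, each column `a` of `W` is a unit vector supported on the single
block `(σ a).1`, on which `D_τ` acts as the scalar `λ_{τ,(σ a).1}`; hence the diagonal entries
of `Wᵀ D_τ W` are the `λ_{τj}`, each repeated `p_j` times, and the noise block contributes
nothing since `λ_{τ0} = 0`.
-/

namespace Matrix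

variable {m n R : Type*}

lemma mul_permMatrix_apply_perm [Fintype n] [DecidableEq n] [NonAssocSemiring R]
    (M : Matrix m n R) (σ : Equiv.Perm n) (i : m) (j : n) :
    (M * σ.permMatrix R) i (σ j) = M i j := by
  simp [PEquiv.mul_toMatrix_toPEquiv]

lemma transpose_mul_diagonal_mul_apply_self_of_support [Fintype m] [DecidableEq m]
    [CommSemiring R] {U : Matrix m n R} {d : m → R} {c : R} {a : n} (hU : (Uᵀ * U) a a = 1) (hsupp : ∀ k, d k ≠ c → U k a = 0) :
    (Uᵀ * diagonal d * U) a a = c := by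
  have hterm : ∀ k, U k a * d k * U k a = c * (U k a * U k a) := fun k => by
    by_cases hk : d k = c
    · rw [hk]; ring
    · simp [hsupp k hk]
  calc (Uᵀ * diagonal d * U) a a = ∑ k, U k a * d k * U k a := by
        simp [mul_apply, diagonal, mul_comm]
    _ = c * (Uᵀ * U) a a := by simp [hterm, mul_sum, mul_apply]
    _ = c := by rw [hU, mul_one]

end Matrix

lemma Fintype.sum_sigma_fin_fst {α M : Type*} [Fintype α] [AddCommMonoid M] (s : α → ℕ)
    (f : α → M) : ∑ i : (j : α) × Fin (s j), f i.1 = ∑ j, s j • f j := by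
  simp [Fintype.sum_sigma]

section BlockPermuted

variable {v : ℕ} {s : Fin (v + 1) → ℕ} {ι : Type*} {lam : ι → Fin (v + 1) → ℝ}
  {W : Matrix (BlkIdx v s) (BlkIdx v s) ℝ} {σ : Equiv.Perm (BlkIdx v s)}

lemma diag_transpose_mul_Dmat_mul_of_block_support (hWorth : Wᵀ * W = 1)
    (hsupp : ∀ k a, k.1 ≠ (σ a).1 → W k a = 0) (τ : ι) (a : BlkIdx v s) :
    (Wᵀ * Dmat s lam τ * W) a a = lam τ (σ a).1 :=
  transpose_mul_diagonal_mul_apply_self_of_support (by simp [hWorth])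
    fun k hk => hsupp k a fun h => hk (by rw [h])

lemma gObj_eq_of_block_support [Fintype ι] (hWorth : Wᵀ * W = 1)
    (hsupp : ∀ k a, k.1 ≠ (σ a).1 → W k a = 0) :
    gObj s lam W = ∑ τ, ∑ j, lam τ j ^ 2 * s j := by
  refine sum_congr rfl fun τ _ => ?_
  calc ∑ a, (Wᵀ * Dmat s lam τ * W) a a ^ 2 = ∑ a, lam τ (σ a).1 ^ 2 := by
        simp only [diag_transpose_mul_Dmat_mul_of_block_support hWorth hsupp]
    _ = ∑ a : BlkIdx v s, lam τ a.1 ^ 2 := Equiv.sum_comp σ fun a => lam τ a.1 ^ 2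
    _ = ∑ j, lam τ j ^ 2 * s j := by
        simp only [Fintype.sum_sigma_fin_fst s fun j => lam τ j ^ 2, nsmul_eq_mul, mul_comm]

end BlockPermuted

theorem statement9_general (v : ℕ) (s : Fin (v + 1) → ℕ)
    {ι : Type*} [Fintype ι]
    (lam : ι → Fin (v + 1) → ℝ) (hlam0 : ∀ τ, lam τ (Fin.last v) = 0)
    (W : Matrix (BlkIdx v s) (BlkIdx v s) ℝ) (hWorth : Wᵀ * W = 1)
    (hP : ∃ σ : Equiv.Perm (BlkIdx v s),
      ∀ a b : BlkIdx v s, a.1 ≠ b.1 → (W * σ.permMatrix ℝ) a b = 0) :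
    gObj s lam W = gMax s lam := by
  obtain ⟨σ, hσ⟩ := hP
  have hsupp : ∀ k a, k.1 ≠ (σ a).1 → W k a = 0 := fun k a h => by
    simpa [mul_permMatrix_apply_perm] using hσ k (σ a) h
  rw [gObj_eq_of_block_support hWorth hsupp, gMax]
  exact sum_congr rfl fun τ _ => (sum_erase _ (by simp [hlam0 τ])).symm

theorem statement9 (v : ℕ) (hv : 1 ≤ v) (s : Fin (v + 1) → ℕ) (hs : ∀ j, 1 ≤ s j)
    {ι : Type*} [Fintype ι] [Nonempty ι]
    (lam : ι → Fin (v + 1) → ℝ) (hlam0 : ∀ τ, lam τ (Fin.last v) = 0)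
    (W : Matrix (BlkIdx v s) (BlkIdx v s) ℝ) (hWorth : Wᵀ * W = 1)
    (hP : ∃ σ : Equiv.Perm (BlkIdx v s),
      ∀ a b : BlkIdx v s, a.1 ≠ b.1 → (W * σ.permMatrix ℝ) a b = 0) :
    gObj s lam W = gMax s lam :=
  statement9_general v s lam hlam0 W hWorth hP
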